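/- Let D be a τ-atomic integral domain with τ symmetric, refinable, and associate preserving. If D is a τ-irreducible divisor finite domain, then D satisfies τ-ACCP. -/

import Mathlib

/-- `a` is a nonzero nonunit, i.e. an element of `D^#`. -/
def NzNonunit {D : Type*} [CommRing D] (a : D) : Prop := a ≠ 0 ∧ ¬ IsUnit a

/-- `l` is the list of factors of a `τ`-factorization of `a`:
`a = λ * l.prod` for a unit `λ`, the factors are nonzero nonunits and pairwise `τ`-related. -/
def TauFact {D : Type*} [CommRing D] (τ : D → D → Prop) (l : List D) (a : D) : Prop :=
  l ≠ [] ∧ (∀ b ∈ l, NzNonunit b) ∧ l.Pairwise τ ∧ ∃ u : Dˣ, a = (u : D) * l.prod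

/-- `b` τ-divides `a`: `b` occurs as a factor in some τ-factorization of `a`. -/
def TauDvd {D : Type*} [CommRing D] (τ : D → D → Prop) (b a : D) : Prop :=
  ∃ l, TauFact τ l a ∧ b ∈ l

/-- `a` is τ-irreducible (a τ-atom): all its τ-factorizations are trivial. -/
def TauIrred {D : Type*} [CommRing D] (τ : D → D → Prop) (a : D) : Prop :=
  NzNonunit a ∧ ∀ l, TauFact τ l a → l.length = 1

/-- `l` is a τ-atomic factorization of `a`. -/
def TauAtomicFact {D : Type*} [CommRing D] (τ : D → D → Prop) (l : List D) (a : D) : Prop :=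
  TauFact τ l a ∧ ∀ b ∈ l, TauIrred τ b

/-- `D` is τ-atomic: every nonzero nonunit has a τ-atomic factorization. -/
def TauAtomic {D : Type*} [CommRing D] (τ : D → D → Prop) : Prop :=
  ∀ a : D, NzNonunit a → ∃ l, TauAtomicFact τ l a

def TauSymm {D : Type*} [CommRing D] (τ : D → D → Prop) : Prop :=
  ∀ a b, τ a b → τ b a

/-- τ is associate preserving. -/
def TauAssocPres {D : Type*} [CommRing D] (τ : D → D → Prop) : Prop :=
  ∀ a b b' : D, τ a b → Associated b b' → τ a b'

/-- τ is refinable: replacing each factor of a τ-factorization by a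
τ-factorization of it again yields a τ-factorization. -/
def TauRefinable {D : Type*} [CommRing D] (τ : D → D → Prop) : Prop :=
  ∀ (a : D) (l : List D) (F : List (List D)),
    TauFact τ l a → List.Forall₂ (fun b m => TauFact τ m b) l F →
    TauFact τ F.flatten a

/-- `a` is a vertex of the τ-irreducible divisor graph `G_τ(x)`. -/
def GVert {D : Type*} [CommRing D] (τ : D → D → Prop) (x a : D) : Prop :=
  TauIrred τ a ∧ TauDvd τ a x

/-- `a` and `b` are adjacent (distinct, i.e. non-associated, vertices joined by an edge)
in `G_τ(x)`: some τ-factorization of `x` contains associates of both. -/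
def GAdj {D : Type*} [CommRing D] (τ : D → D → Prop) (x a b : D) : Prop :=
  GVert τ x a ∧ GVert τ x b ∧ ¬ Associated a b ∧
  ∃ l, TauFact τ l x ∧ (∃ a' ∈ l, Associated a a') ∧ (∃ b' ∈ l, Associated b b')

/-- `G_τ(x)` is connected (vertices are taken up to associates). -/
def GConnected {D : Type*} [CommRing D] (τ : D → D → Prop) (x : D) : Prop :=
  ∀ a b, GVert τ x a → GVert τ x b →
    Relation.ReflTransGen (fun u v => GAdj τ x u v ∨ Associated u v) a b

/-- The reduced graph `G̅_τ(x)` (loops deleted) is connected; loops do not affect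
connectivity, so this is connectivity with respect to the same adjacency relation. -/
def GBarConnected {D : Type*} [CommRing D] (τ : D → D → Prop) (x : D) : Prop :=
  ∀ a b, GVert τ x a → GVert τ x b →
    Relation.ReflTransGen (fun u v => GAdj τ x u v ∨ Associated u v) a b

/-- `G_τ(x)` is a pseudoclique: any two non-associated vertices are adjacent.
(Equivalently, the reduced graph `G̅_τ(x)` is a clique / complete graph.) -/
def GPseudoclique {D : Type*} [CommRing D] (τ : D → D → Prop) (x : D) : Prop :=
  ∀ a b, GVert τ x a → GVert τ x b → ¬ Associated a b → GAdj τ x a b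

/-- `Diam(G_τ(x)) ≤ 1`: any two vertices are equal (associated) or adjacent. -/
def GDiamLeOne {D : Type*} [CommRing D] (τ : D → D → Prop) (x : D) : Prop :=
  ∀ a b, GVert τ x a → GVert τ x b → Associated a b ∨ GAdj τ x a b

/-- `G_τ(x)` has finitely many vertices (up to associates). -/
def GVertFinite {D : Type*} [CommRing D] (τ : D → D → Prop) (x : D) : Prop :=
  ∃ s : Finset D, ∀ a, GVert τ x a → ∃ c ∈ s, Associated a c

/-- The vertex `a` of `G_τ(x)` has finite degree: finitely many adjacent vertices
up to associates (loops not counted). -/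
def GDegFinite {D : Type*} [CommRing D] (τ : D → D → Prop) (x a : D) : Prop :=
  ∃ s : Finset D, ∀ b, GAdj τ x a b → ∃ c ∈ s, Associated b c

/-- The vertex `a` of `G_τ(x)` carries finitely many loops: there is a uniform bound on
the number of occurrences of associates of `a` in τ-atomic factorizations of `x`. -/
def GLoopsFinite {D : Type*} [CommRing D] (τ : D → D → Prop) (x a : D) : Prop :=
  ∃ N : ℕ, ∀ l m : List D, TauAtomicFact τ l x → m.Sublist l →
    (∀ b ∈ m, Associated a b) → m.length ≤ N

/-- `D` satisfies τ-ACCP. -/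
def TauACCP {D : Type*} [CommRing D] (τ : D → D → Prop) : Prop :=
  ∀ a : ℕ → D, (∀ i, TauDvd τ (a (i + 1)) (a i)) →
    ∃ N, ∀ i, N ≤ i → Associated (a i) (a N)

/-- `D` is a τ-UFD. -/
def TauUFD {D : Type*} [CommRing D] (τ : D → D → Prop) : Prop :=
  TauAtomic τ ∧ ∀ (x : D) (l₁ l₂ : List D), TauAtomicFact τ l₁ x → TauAtomicFact τ l₂ x →
    Multiset.Rel Associated (l₁ : Multiset D) (l₂ : Multiset D)

/-- `D` is a τ-FFD: each nonzero nonunit has only finitely many τ-factorizations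
up to rearrangement and associates. -/
def TauFFD {D : Type*} [CommRing D] (τ : D → D → Prop) : Prop :=
  ∀ x : D, NzNonunit x → ∃ S : Finset (Multiset D),
    ∀ l : List D, TauFact τ l x → ∃ m ∈ S, Multiset.Rel Associated (l : Multiset D) m

/-- `D` is a τ-WFFD: each nonzero nonunit has finitely many τ-divisors up to associates. -/
def TauWFFD {D : Type*} [CommRing D] (τ : D → D → Prop) : Prop :=
  ∀ x : D, NzNonunit x → ∃ s : Finset D,
    ∀ b, TauDvd τ b x → ∃ c ∈ s, Associated b c

/-- `D` is a τ-idf domain: each nonzero nonunit has finitely many τ-irreducible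
τ-divisors up to associates. -/
def TauIdf {D : Type*} [CommRing D] (τ : D → D → Prop) : Prop :=
  ∀ x : D, NzNonunit x → ∃ s : Finset D,
    ∀ b, TauIrred τ b → TauDvd τ b x → ∃ c ∈ s, Associated b c

/-!
If the chain `(a i)` did not stabilise, substituting each `a n` inside a τ-factorization of `a 0`
by a τ-factorization of `a n` containing `a (n + 1)` (refinability) would produce τ-factorizations
of `a 0`, and after refining further τ-atomic ones, of unbounded length. Up to associates the
factors of a τ-atomic factorization of `a 0` lie in the finite set of its τ-irreducible τ-divisors,
and since `D` is a domain two such factor multisets cannot be properly comparable. By Dickson's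
lemma there are then only finitely many, so their lengths are bounded.
-/

theorem Multiset.wellQuasiOrderedLE_of_finite {ι : Type*} [Finite ι] :
    WellQuasiOrderedLE (Multiset ι) := by
  classical
  exact Finsupp.orderIsoMultiset.wellQuasiOrderedLE_iff.1 inferInstance

theorem List.prod_map_associated {M : Type*} [CommMonoid M] {l : List M} {f : M → M}
    (h : ∀ b ∈ l, Associated (f b) b) : Associated (l.map f).prod l.prod := by
  induction l with
  | nil => rfl
  | cons b l ih =>
    simp only [List.map_cons, List.prod_cons]
    exact (h b (by simp)).mul_mul (ih fun c hc => h c (by simp [hc]))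

section Multiplicative

variable {α : Type*} [CommMonoidWithZero α] [IsCancelMulZero α]

theorem Multiset.eq_of_le_of_associated_prod {M N : Multiset α} (hle : M ≤ N)
    (hN : ∀ y ∈ N, ¬IsUnit y) (hM : M.prod ≠ 0) (h : Associated N.prod M.prod) : M = N := by
  obtain ⟨u, rfl⟩ := Multiset.le_iff_exists_add.1 hle
  rw [Multiset.prod_add] at h
  have hu : IsUnit u.prod := isUnit_of_associated_mul h hM
  suffices u = 0 by simp [this]
  refine Multiset.eq_zero_of_forall_notMem fun y hy => hN y (by simp [hy]) ?_
  exact isUnit_of_dvd_unit (Multiset.dvd_prod hy) hu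

/-- Dickson's lemma: such multisets form an antichain, which must be finite. -/
theorem finite_setOf_multiset_associated_prod {s : Set α} (hs : s.Finite)
    (hsu : ∀ y ∈ s, ¬IsUnit y) {x : α} (hx : x ≠ 0) :
    {M : Multiset α | (∀ y ∈ M, y ∈ s) ∧ Associated M.prod x}.Finite := by
  have : Finite s := hs
  have : WellQuasiOrderedLE (Multiset s) := Multiset.wellQuasiOrderedLE_of_finite
  refine IsAntichain.finite_of_partiallyWellOrderedOn (r := (· ≤ ·)) ?_ ?_
  · rintro M ⟨-, hM⟩ N ⟨hNs, hN⟩ hne hle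
    have hM0 : M.prod ≠ 0 := fun h0 => hx (by simpa [h0] using hM.symm)
    exact hne (Multiset.eq_of_le_of_associated_prod hle (fun y hy => hsu y (hNs y hy)) hM0
      (hN.trans hM.symm))
  · refine ((Set.isPWO_of_wellQuasiOrderedLE (Set.univ : Set (Multiset s))).image_of_monotone
      (Multiset.map_mono Subtype.val)).mono ?_
    rintro M ⟨hMs, -⟩
    lift M to Multiset s using hMs
    exact ⟨M, trivial, rfl⟩

end Multiplicative

section TauFactorization

variable {D : Type*} [CommRing D] {τ : D → D → Prop}

theorem TauFact.associated_prod {l : List D} {x : D} (h : TauFact τ l x) :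
    Associated l.prod x := by
  obtain ⟨-, -, -, u, rfl⟩ := h
  exact ⟨u, mul_comm _ _⟩

theorem TauFact.nzNonunit [IsDomain D] {l : List D} {x : D} (h : TauFact τ l x) : NzNonunit x := by
  obtain ⟨b, hb⟩ := List.exists_mem_of_ne_nil l h.1
  refine ⟨fun hx => ?_, fun hx => (h.2.1 b hb).2 ?_⟩
  · exact (h.2.1 0 (List.prod_eq_zero_iff.1 (h.associated_prod.eq_zero_iff.2 hx))).1 rfl
  · exact isUnit_of_dvd_unit (List.dvd_prod hb) (h.associated_prod.symm.isUnit hx)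

theorem tauFact_singleton {b : D} (h : NzNonunit b) : TauFact τ [b] b :=
  ⟨by simp, by simpa using h, by simp, 1, by simp⟩

theorem TauFact.two_le_length {m : List D} {b c : D} (hm : TauFact τ m b) (hc : c ∈ m)
    (hcb : ¬Associated c b) : 2 ≤ m.length := by
  rcases m with _ | ⟨d, _ | ⟨e, m⟩⟩
  · exact absurd rfl hm.1
  · rw [List.mem_singleton.1 hc] at hcb
    exact absurd (by simpa using hm.associated_prod) hcb
  · simp

theorem TauFact.replace (href : TauRefinable τ) {l₁ l₂ m : List D} {x b : D}
    (h : TauFact τ (l₁ ++ b :: l₂) x) (hm : TauFact τ m b) : TauFact τ (l₁ ++ m ++ l₂) x := by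
  have hsingle : ∀ l : List D, (∀ c ∈ l, NzNonunit c) →
      List.Forall₂ (fun c m => TauFact τ m c) l (l.map fun c => [c]) := fun l hl =>
    List.forall₂_map_right_iff.2 (List.forall₂_same.2 fun c hc => tauFact_singleton (hl c hc))
  have hnz := h.2.1
  have := href x _ (l₁.map (fun c => [c]) ++ m :: l₂.map (fun c => [c])) h
    (List.rel_append (hsingle l₁ fun c hc => hnz c (by simp [hc]))
      (.cons hm (hsingle l₂ fun c hc => hnz c (by simp [hc]))))
  simpa [← List.flatMap_def] using this

theorem TauFact.exists_tauAtomicFact_length_le (href : TauRefinable τ)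
    (hatomic : TauAtomic τ) {l : List D} {x : D} (hl : TauFact τ l x) :
    ∃ A, TauAtomicFact τ A x ∧ l.length ≤ A.length := by
  choose! g hg using hatomic
  have hfact : ∀ b ∈ l, TauAtomicFact τ (g b) b := fun b hb => hg b (hl.2.1 b hb)
  refine ⟨(l.map g).flatten, ⟨href x l _ hl ?_, ?_⟩, ?_⟩
  · exact List.forall₂_map_right_iff.2 (List.forall₂_same.2 fun b hb => (hfact b hb).1)
  · simp only [List.mem_flatten, List.mem_map]
    rintro c ⟨_, ⟨b, hb, rfl⟩, hc⟩
    exact (hfact b hb).2 c hc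
  · rw [List.length_flatten]
    refine (List.length_le_sum_of_one_le _ ?_).trans_eq' (by simp)
    simp only [List.map_map, List.mem_map, Function.comp_apply]
    rintro _ ⟨b, hb, rfl⟩
    exact List.length_pos_iff.2 (hfact b hb).1.1

theorem exists_forall_tauAtomicFact_length_le [IsDomain D] {x : D} (hx : x ≠ 0) {s : Finset D}
    (hs : ∀ b, TauIrred τ b → TauDvd τ b x → ∃ c ∈ s, Associated b c) :
    ∃ N, ∀ A, TauAtomicFact τ A x → A.length ≤ N := by
  choose! r hrs hr using hs
  have hfin := finite_setOf_multiset_associated_prod (s.finite_toSet.inter_of_left {c | ¬IsUnit c})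
    (fun y hy => hy.2) hx
  obtain ⟨N, hN⟩ := (hfin.image Multiset.card).bddAbove
  refine ⟨N, fun A hA => hN ⟨(A.map r : Multiset D), ⟨?_, ?_⟩, by simp⟩⟩
  · simp only [Multiset.mem_coe, List.mem_map]
    rintro _ ⟨b, hb, rfl⟩
    have hirr := hA.2 b hb
    have hdvd : TauDvd τ b x := ⟨A, hA.1, hb⟩
    exact ⟨hrs b hirr hdvd, fun hu => hirr.1.2 ((hr b hirr hdvd).isUnit_iff.2 hu)⟩
  · rw [Multiset.prod_coe]
    exact (List.prod_map_associated fun b hb =>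
      (hr b (hA.2 b hb) ⟨A, hA.1, hb⟩).symm).trans hA.1.associated_prod

theorem TauIdf.exists_forall_tauFact_length_le [IsDomain D] (hidf : TauIdf τ)
    (href : TauRefinable τ) (hatomic : TauAtomic τ) {x : D} (hx : NzNonunit x) :
    ∃ N, ∀ l, TauFact τ l x → l.length ≤ N := by
  obtain ⟨s, hs⟩ := hidf x hx
  obtain ⟨N, hN⟩ := exists_forall_tauAtomicFact_length_le hx.1 hs
  refine ⟨N, fun l hl => ?_⟩
  obtain ⟨A, hA, hlA⟩ := hl.exists_tauAtomicFact_length_le href hatomic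
  exact hlA.trans (hN A hA)

theorem exists_tauFact_mem_count_lt_length [IsDomain D] (href : TauRefinable τ) {a : ℕ → D}
    (hchain : ∀ i, TauDvd τ (a (i + 1)) (a i))
    [DecidablePred fun i => ¬Associated (a (i + 1)) (a i)] (n : ℕ) :
    ∃ l, TauFact τ l (a 0) ∧ a n ∈ l ∧
      Nat.count (fun i => ¬Associated (a (i + 1)) (a i)) n < l.length := by
  induction n with
  | zero =>
    obtain ⟨l, hl, -⟩ := hchain 0
    exact ⟨[a 0], tauFact_singleton hl.nzNonunit, by simp, by simp⟩
  | succ n ih =>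
    obtain ⟨l, hl, hmem, hlen⟩ := ih
    obtain ⟨l₁, l₂, rfl⟩ := List.append_of_mem hmem
    obtain ⟨m, hm, hmm⟩ := hchain n
    refine ⟨l₁ ++ m ++ l₂, hl.replace href hm, by simp [hmm], ?_⟩
    have hm1 : 1 ≤ m.length := List.length_pos_iff.2 hm.1
    rw [Nat.count_succ]
    simp only [List.length_append, List.length_cons] at hlen ⊢
    split_ifs with hassoc
    · omega
    · have := hm.two_le_length hmm hassoc
      omega

end TauFactorization

theorem exists_forall_associated_of_finite {M : Type*} [Monoid M] {a : ℕ → M}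
    (h : {i | ¬Associated (a (i + 1)) (a i)}.Finite) :
    ∃ N, ∀ i, N ≤ i → Associated (a i) (a N) := by
  obtain ⟨N, hN⟩ := h.bddAbove
  refine ⟨N + 1, fun i hi => ?_⟩
  induction i, hi using Nat.le_induction with
  | base => rfl
  | succ i hi ih =>
    have : Associated (a (i + 1)) (a i) := by
      by_contra hne
      exact absurd (hN hne) (by omega)
    exact this.trans ih

theorem stmt15_general {D : Type*} [CommRing D] [IsDomain D] (τ : D → D → Prop)
    (href : TauRefinable τ)
    (hatomic : TauAtomic τ) (hidf : TauIdf τ) :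
    TauACCP τ := by
  classical
  intro a hchain
  by_contra hnot
  have hinf : {i | ¬Associated (a (i + 1)) (a i)}.Infinite := fun hfin =>
    hnot (exists_forall_associated_of_finite hfin)
  obtain ⟨l₀, hl₀, -⟩ := hchain 0
  obtain ⟨N, hN⟩ := hidf.exists_forall_tauFact_length_le href hatomic hl₀.nzNonunit
  obtain ⟨l, hl, -, hlen⟩ := exists_tauFact_mem_count_lt_length href hchain
    (Nat.nth (fun i => ¬Associated (a (i + 1)) (a i)) N)
  rw [Nat.count_nth_of_infinite hinf] at hlen
  exact absurd (hN l hl) (by omega)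

theorem stmt15 {D : Type*} [CommRing D] [IsDomain D] (τ : D → D → Prop)
    (hsym : TauSymm τ) (href : TauRefinable τ) (hap : TauAssocPres τ)
    (hatomic : TauAtomic τ) (hidf : TauIdf τ) :
    TauACCP τ :=
  stmt15_general τ href hatomic hidf
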